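/- The map sending a PT-morphism φ : T → U to its Catalan word is injective: two morphisms in PT (possibly with different codomains) having the same Catalan word coincide, i.e. they have the same domain and codomain and are equal as morphisms. -/
import Mathlib

/-- A planar rooted tree, encoded as the finite list of the planar rooted
trees hanging off the root, in their planar (left-to-right) order. -/
inductive PTree : Type where
  | node : List PTree → PTree

/-- Valid vertex positions in a planar rooted tree: a vertex is the sequence
of child indices along the path from the root to it. -/
inductive PTree.Pos : PTree → List ℕ → Prop where
  | nil {t : PTree} : Pos t []
  | cons {ts : List PTree} {i : ℕ} {p : List ℕ} (h : i < ts.length) :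
      Pos ts[i] p → Pos (PTree.node ts) (i :: p)

/-- The type of vertices of a planar rooted tree.  The tree order is
`v ≤ w` iff `w.1 <+: v.1` (i.e. `w` lies on the path from `v` to the root),
and the depth-first ordering is the lexicographic order `List.Lex (· < ·)`
on positions. -/
def PTree.PosT (t : PTree) : Type := {p : List ℕ // PTree.Pos t p}

/-- A morphism in the category `PT`: a map on vertices which preserves and
reflects the tree order (an order embedding; such a map is automatically
injective), preserves the root, and preserves the depth-first ordering. -/
structure PTHom (T U : PTree) where
  toFun : T.PosT → U.PosT
  inj : Function.Injective toFun
  map_le : ∀ p q : T.PosT, q.1 <+: p.1 → (toFun q).1 <+: (toFun p).1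
  reflect_le : ∀ p q : T.PosT, (toFun q).1 <+: (toFun p).1 → q.1 <+: p.1
  map_root : (toFun ⟨[], PTree.Pos.nil⟩).1 = []
  map_dfle : ∀ p q : T.PosT, List.Lex (· < ·) p.1 q.1 →
      List.Lex (· < ·) (toFun p).1 (toFun q).1

/-- The alphabet of Catalan words: travelling up or down an edge of the
codomain, the edge being either marked with a label `i` (`some i`) or
unmarked (`none`).  Unmarked symbols are the parentheses `(` and `)`. -/
inductive CatSym : Type where
  | up : Option ℕ → CatSym
  | down : Option ℕ → CatSym

/-- The marking of the edges of the codomain of `φ : T → U` determined by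
`φ`: the edge of `U` below the vertex at position `q` is marked with `i` iff
it lies on the image path `φ(e)` of an edge `e` of `T` whose target (the
endpoint nearer the root) is at distance `i` from the root of `T`. -/
noncomputable def markOf {T U : PTree} (φ : PTHom T U) (q : List ℕ) : Option ℕ := by
  classical
  exact if h : ∃ (t s : T.PosT) (k : ℕ), t.1 = s.1 ++ [k] ∧
      q <+: (φ.toFun t).1 ∧ (φ.toFun s).1 <+: q ∧ (φ.toFun s).1 ≠ q
    then some h.choose_spec.choose.1.length
    else none

/-- The clockwise depth-first tree walk along a forest of planar rooted
trees, recording, for each edge traversal, the corresponding symbol of the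
Catalan word: here `l` is the forest, `q` the position of its root, `k` the
child index of the first tree of the forest, and `m` the marking of edges. -/
def walkF (m : List ℕ → Option ℕ) : List PTree → List ℕ → ℕ → List CatSym
  | [], _, _ => []
  | PTree.node us :: ts, q, k =>
      CatSym.up (m (q ++ [k])) ::
        (walkF m us (q ++ [k]) 0 ++
          (CatSym.down (m (q ++ [k])) :: walkF m ts q (k + 1)))
termination_by l _ _ => sizeOf l

/-- The forest of subtrees hanging off the root. -/
def PTree.children : PTree → List PTree
  | PTree.node ts => ts

/-- The Catalan word of a morphism `φ : T → U` in `PT`: the record of the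
clockwise depth-first tree walk along `U` with edges marked by `φ`. -/
noncomputable def catalanWord {T U : PTree} (φ : PTHom T U) : List CatSym :=
  walkF (markOf φ) U.children [] 0

/-! ### Auxiliary list lemmas -/

section ListAux

lemma aux_prefix_append_cases {α} {p l1 l2 : List α} (h : p <+: l1 ++ l2) :
    p <+: l1 ∨ ∃ p2, p = l1 ++ p2 ∧ p2 <+: l2 := by
  rcases le_or_gt p.length l1.length with hl | hl
  · exact Or.inl (List.prefix_of_prefix_length_le h (l1.prefix_append l2) hl)
  · right
    have h1 : l1 <+: p := List.prefix_of_prefix_length_le (l1.prefix_append l2) h hl.le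
    obtain ⟨p2, rfl⟩ := h1
    refine ⟨p2, rfl, ?_⟩
    obtain ⟨r, hr⟩ := h
    rw [List.append_assoc] at hr
    exact ⟨r, List.append_cancel_left hr⟩

lemma aux_prefix_antisymm {α} {l m : List α} (h1 : l <+: m) (h2 : m <+: l) : l = m :=
  List.IsPrefix.eq_of_length_le h1 h2.length_le

lemma aux_exists_snoc_prefix {q l : List ℕ} (h : q <+: l) (hne : q ≠ l) :
    ∃ j, q ++ [j] <+: l := by
  obtain ⟨r, rfl⟩ := h
  cases r with
  | nil => simp at hne
  | cons j r => exact ⟨j, by simp⟩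

lemma aux_lex_append (s : List ℕ) {l1 l2 : List ℕ} (h : List.Lex (· < ·) l1 l2) :
    List.Lex (· < ·) (s ++ l1) (s ++ l2) := by
  induction s with
  | nil => simpa
  | cons a s ih => exact List.Lex.cons ih

lemma aux_lex_single {k j : ℕ} (h : k < j) (l1 l2 : List ℕ) :
    List.Lex (· < ·) (k :: l1) (j :: l2) := List.Lex.rel h

lemma aux_lex_asymm : ∀ {l1 l2 : List ℕ}, List.Lex (· < ·) l1 l2 →
    List.Lex (· < ·) l2 l1 → False := by
  intro l1 l2 h1
  induction h1 with
  | nil => intro h2; cases h2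
  | @cons a l1 l2 h ih =>
      intro h2
      cases h2 with
      | cons h' => exact ih h'
      | rel h' => exact lt_irrefl _ h'
  | @rel a l1 b l2 h =>
      intro h2
      cases h2 with
      | cons h' => exact lt_irrefl _ h
      | rel h' => exact lt_asymm h h'

end ListAux

/-! ### Position lemmas -/

namespace PTree

lemma Pos.of_prefix : ∀ {t : PTree} {p q : List ℕ}, Pos t p → q <+: p → Pos t q := by
  intro t p q h
  induction h generalizing q with
  | nil =>
      intro hq
      rw [List.prefix_nil] at hq
      subst hq; exact Pos.nil
  | @cons ts i p h hp ih =>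
      intro hq
      cases q with
      | nil => exact Pos.nil
      | cons j q =>
          rw [List.cons_prefix_cons] at hq
          obtain ⟨rfl, hq⟩ := hq
          exact Pos.cons h (ih hq)

lemma Pos.sibling : ∀ {t : PTree} {s : List ℕ} {k j : ℕ}, Pos t (s ++ [k]) → j ≤ k →
    Pos t (s ++ [j]) := by
  intro t s
  induction s generalizing t with
  | nil =>
      intro k j h hj
      cases h with
      | cons h hp => exact Pos.cons (lt_of_le_of_lt hj h) Pos.nil
  | cons i s ih =>
      intro k j h hj
      rw [List.cons_append] at h ⊢
      cases h with
      | cons h hp => exact Pos.cons h (ih hp hj)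

lemma pos_single_iff {ts : List PTree} {i : ℕ} : Pos (node ts) [i] ↔ i < ts.length := by
  constructor
  · intro h; cases h with | cons h _ => exact h
  · intro h; exact Pos.cons h Pos.nil

lemma pos_cons_iff {ts : List PTree} {i : ℕ} {p : List ℕ} (h : i < ts.length) :
    Pos (node ts) (i :: p) ↔ Pos ts[i] p := by
  constructor
  · intro hp; cases hp with | cons h' hp => exact hp
  · intro hp; exact Pos.cons h hp

theorem eq_of_pos_iff : ∀ (T T' : PTree), (∀ p, T.Pos p ↔ T'.Pos p) → T = T'
  | .node ts, .node ts', h => by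
    have hlen : ts.length = ts'.length := by
      by_contra hne
      rcases Nat.lt_or_ge ts.length ts'.length with hl | hl
      · have := (h [ts.length]).2 (pos_single_iff.2 hl)
        exact absurd (pos_single_iff.1 this) (lt_irrefl _)
      · have hlt : ts'.length < ts.length := lt_of_le_of_ne hl (Ne.symm hne)
        have := (h [ts'.length]).1 (pos_single_iff.2 hlt)
        exact absurd (pos_single_iff.1 this) (lt_irrefl _)
    congr 1
    apply List.ext_getElem hlen
    intro i hi hi'
    apply eq_of_pos_iff
    intro p
    rw [← pos_cons_iff hi, ← pos_cons_iff hi', h]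
termination_by T => sizeOf T
decreasing_by
  simp only [PTree.node.sizeOf_spec]
  have := List.sizeOf_lt_of_mem (ts.getElem_mem hi)
  omega

end PTree

/-! ### Balance of Catalan words -/

def catBal (l : List CatSym) : ℤ :=
  (l.map fun c => match c with | .up _ => (1 : ℤ) | .down _ => -1).sum

lemma catBal_nil : catBal [] = 0 := rfl

lemma catBal_cons (c : CatSym) (l : List CatSym) :
    catBal (c :: l) = (match c with | .up _ => (1:ℤ) | .down _ => -1) + catBal l := by
  simp [catBal]

lemma catBal_up (a : Option ℕ) (l : List CatSym) : catBal (CatSym.up a :: l) = 1 + catBal l := by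
  simp [catBal]

lemma catBal_down (a : Option ℕ) (l : List CatSym) : catBal (CatSym.down a :: l) = -1 + catBal l := by
  simp [catBal]

lemma catBal_append (l1 l2 : List CatSym) : catBal (l1 ++ l2) = catBal l1 + catBal l2 := by
  simp [catBal]

theorem walk_bal (m : List ℕ → Option ℕ) : ∀ (ts : List PTree) (q : List ℕ) (k : ℕ),
    catBal (walkF m ts q k) = 0 ∧ ∀ p, p <+: walkF m ts q k → 0 ≤ catBal p
  | [], q, k => by
      constructor
      · simp [walkF, catBal]
      · intro p hp
        rw [show walkF m [] q k = [] from by simp [walkF], List.prefix_nil] at hp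
        subst hp; simp [catBal]
  | PTree.node us :: ts, q, k => by
      have h1 := walk_bal m us (q ++ [k]) 0
      have h2 := walk_bal m ts q (k + 1)
      have heq : walkF m (PTree.node us :: ts) q k =
          CatSym.up (m (q ++ [k])) :: (walkF m us (q ++ [k]) 0 ++
            (CatSym.down (m (q ++ [k])) :: walkF m ts q (k + 1))) := by
        rw [walkF]
      constructor
      · rw [heq, catBal_up, catBal_append, catBal_down, h1.1, h2.1]; ring
      · intro p hp
        rw [heq] at hp
        cases p with
        | nil => simp [catBal]
        | cons c p =>
            rw [List.cons_prefix_cons] at hp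
            obtain ⟨rfl, hp⟩ := hp
            rcases aux_prefix_append_cases hp with hp | ⟨p2, rfl, hp2⟩
            · have := h1.2 p hp
              rw [catBal_up]; omega
            · cases p2 with
              | nil =>
                  rw [catBal_up, catBal_append, h1.1]; simp [catBal]
              | cons c2 p2 =>
                  rw [List.cons_prefix_cons] at hp2
                  obtain ⟨rfl, hp2⟩ := hp2
                  have := h2.2 p2 hp2
                  rw [catBal_up, catBal_append, h1.1, catBal_down]
                  omega
termination_by ts => sizeOf ts
decreasing_by
  · simp only [List.cons.sizeOf_spec, PTree.node.sizeOf_spec]; omega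
  · simp only [List.cons.sizeOf_spec, PTree.node.sizeOf_spec]; omega

/-- Splitting lemma: balanced prefixes before a `down` determine the split. -/
lemma walk_split : ∀ (l1 l1' : List CatSym) {a a' : Option ℕ} {w2 w2' : List CatSym},
    l1 ++ CatSym.down a :: w2 = l1' ++ CatSym.down a' :: w2' →
    catBal l1 = catBal l1' →
    (∀ p, p <+: l1 → catBal l1 ≤ catBal p) →
    (∀ p, p <+: l1' → catBal l1' ≤ catBal p) →
    l1 = l1'
  | [], l1', a, a', w2, w2' => by
      intro heq hb h1 h2
      cases l1' with
      | nil => rfl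
      | cons c r =>
          rw [List.nil_append, List.cons_append, List.cons.injEq] at heq
          obtain ⟨rfl, -⟩ := heq
          have := h2 [CatSym.down a] ⟨r, rfl⟩
          rw [catBal_nil] at hb
          rw [← hb] at this
          simp [catBal] at this
  | c :: r, [], a, a', w2, w2' => by
      intro heq hb h1 h2
      rw [List.nil_append, List.cons_append, List.cons.injEq] at heq
      obtain ⟨rfl, -⟩ := heq
      have := h1 [CatSym.down a'] ⟨r, rfl⟩
      rw [catBal_nil] at hb
      rw [hb] at this
      simp [catBal] at this
  | c :: r, c' :: r', a, a', w2, w2' => by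
      intro heq hb h1 h2
      rw [List.cons_append, List.cons_append, List.cons.injEq] at heq
      obtain ⟨rfl, heq⟩ := heq
      have hstep : catBal r = catBal r' := by
        simp only [catBal_cons] at hb; omega
      have h1' : ∀ p, p <+: r → catBal r ≤ catBal p := by
        intro p hp
        have := h1 (c :: p) (by rw [List.cons_prefix_cons]; exact ⟨rfl, hp⟩)
        simp only [catBal_cons] at this ⊢; omega
      have h2' : ∀ p, p <+: r' → catBal r' ≤ catBal p := by
        intro p hp
        have := h2 (c :: p) (by rw [List.cons_prefix_cons]; exact ⟨rfl, hp⟩)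
        simp only [catBal_cons] at this ⊢; omega
      rw [walk_split r r' heq hstep h1' h2']

theorem test : True := trivial

theorem walk_inj (m m' : List ℕ → Option ℕ) : ∀ (ts ts' : List PTree) (q : List ℕ) (k : ℕ),
    walkF m ts q k = walkF m' ts' q k →
    ts = ts' ∧ ∀ (i : ℕ) (p : List ℕ) (h : i < ts.length), PTree.Pos ts[i] p →
      m (q ++ (k + i) :: p) = m' (q ++ (k + i) :: p)
  | [], ts', q, k => by
      intro heq
      cases ts' with
      | nil => exact ⟨rfl, by intro i p h; simp at h⟩
      | cons t' rest' =>
          obtain ⟨us'⟩ := t'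
          rw [show walkF m [] q k = [] from by simp [walkF], walkF] at heq
          simp at heq
  | (PTree.node us) :: rest, ts', q, k => by
      intro heq
      cases ts' with
      | nil =>
          rw [show walkF m' [] q k = [] from by simp [walkF], walkF] at heq
          simp at heq
      | cons t' rest' =>
          obtain ⟨us'⟩ := t'
          rw [walkF, walkF, List.cons.injEq] at heq
          obtain ⟨hup, heq⟩ := heq
          have hmk : m (q ++ [k]) = m' (q ++ [k]) := by
            injection hup
          have b1 := walk_bal m us (q ++ [k]) 0
          have b1' := walk_bal m' us' (q ++ [k]) 0
          have hw1 : walkF m us (q ++ [k]) 0 = walkF m' us' (q ++ [k]) 0 := by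
            apply walk_split _ _ heq (by rw [b1.1, b1'.1])
            · intro p hp; rw [b1.1]; exact b1.2 p hp
            · intro p hp; rw [b1'.1]; exact b1'.2 p hp
          rw [hw1, List.append_cancel_left_eq, List.cons.injEq] at heq
          obtain ⟨-, hw2⟩ := heq
          obtain ⟨hus, hmus⟩ := walk_inj m m' us us' (q ++ [k]) 0 hw1
          obtain ⟨hrest, hmrest⟩ := walk_inj m m' rest rest' q (k + 1) hw2
          subst hus hrest
          refine ⟨rfl, ?_⟩
          intro i p h hp
          match i with
          | 0 =>
              cases hp with
              | nil => simpa using hmk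
              | @cons ts j p hj hp =>
                  have := hmus j p hj hp
                  rw [List.append_assoc] at this
                  simpa using this
          | (i' + 1) =>
              have := hmrest i' p (by simpa using h) (by simpa using hp)
              have harith : k + 1 + i' = k + (i' + 1) := by omega
              rw [harith] at this
              exact this
termination_by ts => sizeOf ts
decreasing_by
  · simp only [List.cons.sizeOf_spec, PTree.node.sizeOf_spec]; omega
  · simp only [List.cons.sizeOf_spec, PTree.node.sizeOf_spec]; omega

/-! ### Properties of the marking -/

section Mark

variable {T U : PTree}

lemma hom_inj1 (φ : PTHom T U) {a b : T.PosT} (h : (φ.toFun a).1 = (φ.toFun b).1) :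
    a.1 = b.1 := congrArg Subtype.val (φ.inj (Subtype.ext h))

/-- The `s`-component of a witness for the marking is unique. -/
lemma mark_wit_unique (φ : PTHom T U) {q : List ℕ} {t s t' s' : T.PosT} {k k' : ℕ}
    (h : t.1 = s.1 ++ [k] ∧ q <+: (φ.toFun t).1 ∧ (φ.toFun s).1 <+: q ∧ (φ.toFun s).1 ≠ q)
    (h' : t'.1 = s'.1 ++ [k'] ∧ q <+: (φ.toFun t').1 ∧ (φ.toFun s').1 <+: q ∧
      (φ.toFun s').1 ≠ q) :
    s.1 = s'.1 := by
  obtain ⟨h1, h2, h3, h4⟩ := h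
  obtain ⟨h1', h2', h3', h4'⟩ := h'
  have key : ∀ (t s t' s' : T.PosT) (k : ℕ), t.1 = s.1 ++ [k] →
      q <+: (φ.toFun t).1 → (φ.toFun s').1 <+: q → (φ.toFun s').1 ≠ q →
      s.1 <+: s'.1 → s.1 = s'.1 := by
    intro t s t' s' k h1 h2 h3' h4' hss
    by_cases hlen : s'.1.length ≤ s.1.length
    · exact (List.IsPrefix.eq_of_length_le hss hlen).symm ▸ rfl
    · exfalso
      push_neg at hlen
      have hFs't : (φ.toFun s').1 <+: (φ.toFun t).1 := h3'.trans h2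
      have hs't : s'.1 <+: t.1 := φ.reflect_le t s' hFs't
      rw [h1] at hs't
      have hs'eq : s'.1 = s.1 ++ [k] := by
        apply List.IsPrefix.eq_of_length_le hs't
        rw [List.length_append, List.length_singleton]
        omega
      have : s'.1 = t.1 := by rw [hs'eq, h1]
      have hFeq : (φ.toFun s').1 = (φ.toFun t).1 := by
        rw [Subtype.ext this]
      apply h4'
      apply aux_prefix_antisymm h3'
      rw [hFeq]
      exact h2
  have hcomp : s.1 <+: s'.1 ∨ s'.1 <+: s.1 := by
    have := List.prefix_or_prefix_of_prefix h3 h3'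
    rcases this with hc | hc
    · exact Or.inl (φ.reflect_le s' s hc)
    · exact Or.inr (φ.reflect_le s s' hc)
  rcases hcomp with hc | hc
  · exact key t s t' s' k h1 h2 h3' h4' hc
  · exact (key t' s' t s k' h1' h2' h3 h4 hc).symm

lemma markOf_eq_some_intro (φ : PTHom T U) {q : List ℕ} {t s : T.PosT} {k : ℕ}
    (hw : t.1 = s.1 ++ [k] ∧ q <+: (φ.toFun t).1 ∧ (φ.toFun s).1 <+: q ∧
      (φ.toFun s).1 ≠ q) :
    markOf φ q = some s.1.length := by
  have hex : ∃ (t s : T.PosT) (k : ℕ), t.1 = s.1 ++ [k] ∧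
      q <+: (φ.toFun t).1 ∧ (φ.toFun s).1 <+: q ∧ (φ.toFun s).1 ≠ q := ⟨t, s, k, hw⟩
  unfold markOf
  rw [dif_pos hex]
  obtain ⟨k0, hcw⟩ := hex.choose_spec.choose_spec
  exact congrArg (fun l => some l.length) (mark_wit_unique φ hcw hw)

lemma markOf_eq_some_elim (φ : PTHom T U) {q : List ℕ} {d : ℕ}
    (h : markOf φ q = some d) :
    ∃ (t s : T.PosT) (k : ℕ), t.1 = s.1 ++ [k] ∧ q <+: (φ.toFun t).1 ∧
      (φ.toFun s).1 <+: q ∧ (φ.toFun s).1 ≠ q ∧ s.1.length = d := by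
  unfold markOf at h
  by_cases hex : ∃ (t s : T.PosT) (k : ℕ), t.1 = s.1 ++ [k] ∧
      q <+: (φ.toFun t).1 ∧ (φ.toFun s).1 <+: q ∧ (φ.toFun s).1 ≠ q
  · rw [dif_pos hex] at h
    obtain ⟨k0, h1, h2, h3, h4⟩ := hex.choose_spec.choose_spec
    exact ⟨hex.choose, hex.choose_spec.choose, k0, h1, h2, h3, h4, Option.some.inj h⟩
  · rw [dif_neg hex] at h
    cases h

lemma markOf_nil (φ : PTHom T U) : markOf φ [] = none := by
  unfold markOf
  rw [dif_neg]
  rintro ⟨t, s, k, -, -, h3, h4⟩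
  rw [List.prefix_nil] at h3
  exact h4 h3

/-- `q` is a `d`-maximal marked vertex. -/
def DMax (φ : PTHom T U) (d : ℕ) (q : List ℕ) : Prop :=
  markOf φ q = some d ∧ ∀ j, U.Pos (q ++ [j]) → markOf φ (q ++ [j]) ≠ some d

lemma key_forward (φ : PTHom T U) {t s : T.PosT} {k : ℕ} (ht : t.1 = s.1 ++ [k]) :
    DMax φ s.1.length (φ.toFun t).1 := by
  have hst : s.1 <+: t.1 := ht ▸ ⟨[k], rfl⟩
  have hFst : (φ.toFun s).1 <+: (φ.toFun t).1 := φ.map_le t s hst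
  have hFne : (φ.toFun s).1 ≠ (φ.toFun t).1 := by
    intro hF
    have := hom_inj1 φ hF
    rw [ht] at this
    simpa using congrArg List.length this
  have hw : t.1 = s.1 ++ [k] ∧ (φ.toFun t).1 <+: (φ.toFun t).1 ∧
      (φ.toFun s).1 <+: (φ.toFun t).1 ∧ (φ.toFun s).1 ≠ (φ.toFun t).1 :=
    ⟨ht, List.prefix_refl _, hFst, hFne⟩
  refine ⟨markOf_eq_some_intro φ hw, ?_⟩
  intro j hpos hmark
  obtain ⟨t1, s1, k1, h1, h2, h3, h4, hlen⟩ := markOf_eq_some_elim φ hmark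
  -- `F s1` is a prefix of `F t`
  have hFs1 : (φ.toFun s1).1 <+: (φ.toFun t).1 := by
    apply List.prefix_of_prefix_length_le h3 ((φ.toFun t).1.prefix_append [j])
    have := h3.length_le
    have hne : (φ.toFun s1).1.length ≠ ((φ.toFun t).1 ++ [j]).length := fun hc =>
      h4 (List.IsPrefix.eq_of_length_le h3 (le_of_eq hc.symm))
    rw [List.length_append, List.length_singleton] at this hne
    omega
  have hs1t : s1.1 <+: t.1 := φ.reflect_le t s1 hFs1
  -- `s1 = s` since both are prefixes of `t.1` of the same length
  have hs1s : s1.1 = s.1 := by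
    have hst' : s.1 <+: t.1 := hst
    rcases List.prefix_or_prefix_of_prefix hs1t hst' with hc | hc
    · apply List.IsPrefix.eq_of_length_le hc
      rw [hlen]
    · exact (List.IsPrefix.eq_of_length_le hc (le_of_eq hlen)).symm
  -- `t` is a strict prefix of `t1`, contradiction with lengths
  have hqt1 : (φ.toFun t).1 <+: (φ.toFun t1).1 :=
    (List.prefix_append _ [j]).trans h2
  have htt1 : t.1 <+: t1.1 := φ.reflect_le t1 t hqt1
  have hlent1 : t1.1.length = s.1.length + 1 := by
    rw [h1, List.length_append, List.length_singleton, hs1s]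
  have hlent : t.1.length = s.1.length + 1 := by
    rw [ht, List.length_append, List.length_singleton]
  have : t.1 = t1.1 := List.IsPrefix.eq_of_length_le htt1 (by omega)
  have hFeq : (φ.toFun t).1 = (φ.toFun t1).1 := by rw [Subtype.ext this]
  have := h2.length_le
  rw [← hFeq, List.length_append, List.length_singleton] at this
  omega

lemma key_backward (φ : PTHom T U) {q : List ℕ} {d : ℕ} (h : DMax φ d q) :
    ∃ (t s : T.PosT) (k : ℕ), t.1 = s.1 ++ [k] ∧ s.1.length = d ∧ (φ.toFun t).1 = q := by
  obtain ⟨t, s, k, h1, h2, h3, h4, hlen⟩ := markOf_eq_some_elim φ h.1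
  refine ⟨t, s, k, h1, hlen, ?_⟩
  by_contra hne
  obtain ⟨j, hj⟩ := aux_exists_snoc_prefix h2 (fun hc => hne hc.symm)
  have hpos : U.Pos (q ++ [j]) := PTree.Pos.of_prefix (φ.toFun t).2 hj
  apply h.2 j hpos
  have hw : t.1 = s.1 ++ [k] ∧ q ++ [j] <+: (φ.toFun t).1 ∧
      (φ.toFun s).1 <+: q ++ [j] ∧ (φ.toFun s).1 ≠ q ++ [j] := by
    refine ⟨h1, hj, h3.trans (q.prefix_append [j]), ?_⟩
    intro hc
    have := h3.length_le
    rw [hc, List.length_append, List.length_singleton] at this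
    omega
  rw [markOf_eq_some_intro φ hw, hlen]

end Mark

/-! ### The main semantic lemma -/

section Main

variable {T T' U : PTree}

def Good (φ : PTHom T U) (ψ : PTHom T' U) (p : List ℕ) : Prop :=
  ∃ (h1 : T.Pos p) (h2 : T'.Pos p), (φ.toFun ⟨p, h1⟩).1 = (ψ.toFun ⟨p, h2⟩).1

lemma Good.symm {φ : PTHom T U} {ψ : PTHom T' U} {p : List ℕ} (h : Good φ ψ p) :
    Good ψ φ p := by
  obtain ⟨h1, h2, h⟩ := h; exact ⟨h2, h1, h.symm⟩

lemma dmax_transfer {φ : PTHom T U} {ψ : PTHom T' U}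
    (hm : ∀ r, U.Pos r → markOf φ r = markOf ψ r) {d : ℕ} {q : List ℕ}
    (hq : U.Pos q) (h : DMax φ d q) : DMax ψ d q := by
  refine ⟨by rw [← hm q hq]; exact h.1, ?_⟩
  intro j hj
  rw [← hm _ hj]
  exact h.2 j hj

lemma ident {ψ : PTHom T' U} {s'0 t' : T'.PosT} (sT' : T'.PosT) {k' : ℕ}
    (h : t'.1 = s'0.1 ++ [k']) (hlen : s'0.1.length = sT'.1.length)
    (hpre : (ψ.toFun sT').1 <+: (ψ.toFun t').1) : s'0.1 = sT'.1 := by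
  have h1 : (ψ.toFun s'0).1 <+: (ψ.toFun t').1 := ψ.map_le t' s'0 (h ▸ ⟨[k'], rfl⟩)
  rcases List.prefix_or_prefix_of_prefix h1 hpre with hc | hc
  · have := ψ.reflect_le sT' s'0 hc
    exact List.IsPrefix.eq_of_length_le this (le_of_eq hlen.symm)
  · have := ψ.reflect_le s'0 sT' hc
    exact (List.IsPrefix.eq_of_length_le this (le_of_eq hlen)).symm

lemma main_step (φ : PTHom T U) (ψ : PTHom T' U)
    (hm : ∀ r, U.Pos r → markOf φ r = markOf ψ r) (n : ℕ)
    (IH : ∀ p', p'.length + p'.sum ≤ n → (T.Pos p' ∨ T'.Pos p') → Good φ ψ p')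
    (p : List ℕ) (hμ : p.length + p.sum ≤ n + 1) (hp : T.Pos p) : Good φ ψ p := by
  rcases List.eq_nil_or_concat p with rfl | ⟨s, k, rfl⟩
  · exact ⟨PTree.Pos.nil, PTree.Pos.nil, φ.map_root.trans ψ.map_root.symm⟩
  · rw [List.concat_eq_append] at hp hμ ⊢
    have hμs : s.length + s.sum ≤ n := by
      simp only [List.length_append, List.sum_append, List.length_singleton,
        List.sum_cons, List.sum_nil] at hμ
      omega
    have hPs : T.Pos s := hp.of_prefix ⟨[k], rfl⟩
    obtain ⟨hTs, hT's, hrs⟩ := IH s hμs (Or.inl hPs)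
    have hchild : ∀ j, j < k → Good φ ψ (s ++ [j]) := by
      intro j hj
      refine IH (s ++ [j]) ?_ (Or.inl (hp.sibling hj.le))
      simp only [List.length_append, List.sum_append, List.length_singleton,
        List.sum_cons, List.sum_nil] at hμ ⊢
      omega
    have hd1 : DMax φ s.length ((φ.toFun ⟨s ++ [k], hp⟩).1) :=
      key_forward φ (t := ⟨s ++ [k], hp⟩) (s := ⟨s, hTs⟩) rfl
    have hd2 : DMax ψ s.length ((φ.toFun ⟨s ++ [k], hp⟩).1) :=
      dmax_transfer hm (φ.toFun ⟨s ++ [k], hp⟩).2 hd1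
    obtain ⟨t', s', k', ht', hlen', hFt'⟩ := key_backward ψ hd2
    have hs'1 : s'.1 = s := by
      refine ident (ψ := ψ) (⟨s, hT's⟩ : T'.PosT) ht' hlen' ?_
      rw [hFt', ← hrs]
      exact φ.map_le ⟨s ++ [k], hp⟩ ⟨s, hTs⟩ ⟨[k], rfl⟩
    have ht'1 : t'.1 = s ++ [k'] := by rw [ht', hs'1]
    rcases lt_trichotomy k' k with hlt | rfl | hgt
    · exfalso
      obtain ⟨hTj, hT'j, hrj⟩ := hchild k' hlt
      have h5 : (φ.toFun ⟨s ++ [k'], hTj⟩).1 = (φ.toFun ⟨s ++ [k], hp⟩).1 := by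
        rw [hrj, show (⟨s ++ [k'], hT'j⟩ : T'.PosT) = t' from Subtype.ext ht'1.symm, hFt']
      have := hom_inj1 φ h5
      simp only [List.append_cancel_left_eq, List.cons.injEq] at this
      omega
    · have hT'k : T'.Pos (s ++ [k']) := ht'1 ▸ t'.2
      refine ⟨hp, hT'k, ?_⟩
      have he : (⟨s ++ [k'], hT'k⟩ : T'.PosT) = t' := Subtype.ext ht'1.symm
      rw [he, hFt']
    · exfalso
      have hT'k' : T'.Pos (s ++ [k']) := ht'1 ▸ t'.2
      have hT'k : T'.Pos (s ++ [k]) := hT'k'.sibling hgt.le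
      have hd3 : DMax ψ s.length ((ψ.toFun ⟨s ++ [k], hT'k⟩).1) :=
        key_forward ψ (t := ⟨s ++ [k], hT'k⟩) (s := ⟨s, hT's⟩) rfl
      have hd4 : DMax φ s.length ((ψ.toFun ⟨s ++ [k], hT'k⟩).1) :=
        dmax_transfer (fun r h => (hm r h).symm) (ψ.toFun ⟨s ++ [k], hT'k⟩).2 hd3
      obtain ⟨u, s2, j, hu, hlen2, hFu⟩ := key_backward φ hd4
      have hs2 : s2.1 = s := by
        refine ident (ψ := φ) (⟨s, hTs⟩ : T.PosT) hu hlen2 ?_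
        rw [hFu, hrs]
        exact ψ.map_le ⟨s ++ [k], hT'k⟩ ⟨s, hT's⟩ ⟨[k], rfl⟩
      have hu1 : u.1 = s ++ [j] := by rw [hu, hs2]
      rcases lt_trichotomy j k with hjk | rfl | hjk
      · obtain ⟨hTj, hT'j, hrj⟩ := hchild j hjk
        have h5 : (ψ.toFun ⟨s ++ [j], hT'j⟩).1 = (ψ.toFun ⟨s ++ [k], hT'k⟩).1 := by
          have he : (⟨s ++ [j], hTj⟩ : T.PosT) = u := Subtype.ext hu1.symm
          rw [← hrj, ← hFu, he]
        have := hom_inj1 ψ h5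
        simp only [List.append_cancel_left_eq, List.cons.injEq] at this
        omega
      · have h5 : (ψ.toFun ⟨_, hT'k⟩).1 = (ψ.toFun t').1 := by
          have he : u = (⟨_, hp⟩ : T.PosT) := Subtype.ext hu1
          rw [hFt', ← hFu, he]
        have := hom_inj1 ψ h5
        rw [ht'1] at this
        simp only [List.append_cancel_left_eq, List.cons.injEq] at this
        omega
      · have hlex1 : List.Lex (· < ·) (φ.toFun ⟨s ++ [k], hp⟩).1 (φ.toFun u).1 :=
          φ.map_dfle _ _ (by rw [hu1]; exact aux_lex_append s (aux_lex_single hjk [] []))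
        have hlex2 : List.Lex (· < ·) (ψ.toFun ⟨s ++ [k], hT'k⟩).1 (ψ.toFun t').1 :=
          ψ.map_dfle _ _ (by rw [ht'1]; exact aux_lex_append s (aux_lex_single hgt [] []))
        rw [hFu] at hlex1
        rw [hFt'] at hlex2
        exact aux_lex_asymm hlex1 hlex2

lemma main_lemma (φ : PTHom T U) (ψ : PTHom T' U)
    (hm : ∀ r, U.Pos r → markOf φ r = markOf ψ r) :
    ∀ (n : ℕ) (p : List ℕ), p.length + p.sum ≤ n → (T.Pos p ∨ T'.Pos p) → Good φ ψ p := by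
  intro n
  induction n with
  | zero =>
      intro p hμ hp
      have : p = [] := by
        cases p with
        | nil => rfl
        | cons a p => simp at hμ
      subst this
      exact ⟨PTree.Pos.nil, PTree.Pos.nil, φ.map_root.trans ψ.map_root.symm⟩
  | succ n ih =>
      intro p hμ hp
      rcases hp with hp | hp
      · exact main_step φ ψ hm n ih p hμ hp
      · exact (main_step ψ φ (fun r h => (hm r h).symm) n
          (fun p' h1 h2 => (ih p' h1 h2.symm).symm) p hμ hp).symm

end Main

/-- The map sending a `PT`-morphism `φ : T → U` to its Catalan word is
injective: two morphisms in `PT` (possibly with different codomains) having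
the same Catalan word have the same domain and codomain and are equal. -/
theorem catalanWord_injective {T U T' U' : PTree} (φ : PTHom T U)
    (ψ : PTHom T' U') (h : catalanWord φ = catalanWord ψ) :
    T = T' ∧ U = U' ∧ HEq φ ψ := by
  unfold catalanWord at h
  obtain ⟨hUc, hmk⟩ := walk_inj (markOf φ) (markOf ψ) U.children U'.children [] 0 h
  have hU : U = U' := by
    obtain ⟨ts⟩ := U
    obtain ⟨ts'⟩ := U'
    simpa [PTree.children] using congrArg PTree.node hUc
  subst hU
  have hm : ∀ r, U.Pos r → markOf φ r = markOf ψ r := by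
    intro r hr
    cases hr with
    | nil => rw [markOf_nil, markOf_nil]
    | @cons ts i p hi hp =>
        have := hmk i p (by simpa [PTree.children] using hi)
          (by simpa [PTree.children] using hp)
        simpa using this
  have hboth : ∀ p, (T.Pos p ∨ T'.Pos p) → Good φ ψ p := fun p hp =>
    main_lemma φ ψ hm (p.length + p.sum) p le_rfl hp
  have hT : T = T' := by
    apply PTree.eq_of_pos_iff
    intro p
    constructor
    · intro hp
      obtain ⟨-, h2, -⟩ := hboth p (Or.inl hp)
      exact h2
    · intro hp
      obtain ⟨h1, -, -⟩ := hboth p (Or.inr hp)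
      exact h1
  subst hT
  refine ⟨rfl, rfl, heq_of_eq ?_⟩
  have htf : φ.toFun = ψ.toFun := by
    funext x
    obtain ⟨h1, h2, he⟩ := hboth x.1 (Or.inl x.2)
    exact Subtype.ext he
  cases φ with | mk f a1 a2 a3 a4 a5 =>
  cases ψ with | mk g b1 b2 b3 b4 b5 =>
  have hfg : f = g := htf
  subst hfg
  rfl
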